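/- arXiv:1905.02481 — 2 statements merged into one kernel-verified Lean document; each statement's English description precedes it below -/
import Mathlib

section
/- Let K be an algebraically closed field, V a valuation domain of K, and W₁, W₂ two extensions of V to K(X). If L₁(W₁) = L₁(W₂) ≠ ∅ or L₂(W₁) = L₂(W₂) ≠ ∅, then W₁ = W₂. -/
open scoped Pointwise Classical

section Defs

variable {K : Type*} [Field K] {Γ : Type*} [LinearOrderedCommGroupWithZero Γ]
variable {Λ : Type*} [LinearOrder Λ]

/-- `E = {s ν}` is pseudo-convergent: (additively) `v(s_ρ−s_ν) < v(s_σ−s_ρ)` for `ν<ρ<σ`.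
In Mathlib's multiplicative convention this reads `v (s σ - s ρ) < v (s ρ - s ν)`. -/
def IsPseudoConvergent (v : Valuation K Γ) (s : Λ → K) : Prop :=
  ∀ ⦃ν ρ σ : Λ⦄, ν < ρ → ρ < σ → v (s σ - s ρ) < v (s ρ - s ν)

/-- `E = {s ν}` is pseudo-divergent: (additively) `v(s_ρ−s_ν) > v(s_σ−s_ρ)` for `ν<ρ<σ`. -/
def IsPseudoDivergent (v : Valuation K Γ) (s : Λ → K) : Prop :=
  ∀ ⦃ν ρ σ : Λ⦄, ν < ρ → ρ < σ → v (s ρ - s ν) < v (s σ - s ρ)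

/-- `E = {s ν}` is pseudo-stationary: the terms are distinct and all pairwise differences
have the same (nonzero) value. -/
def IsPseudoStationary (v : Valuation K Γ) (s : Λ → K) : Prop :=
  (∀ ⦃ν μ : Λ⦄, ν ≠ μ → s ν ≠ s μ) ∧
    ∀ ⦃ν μ ν' μ' : Λ⦄, ν ≠ μ → ν' ≠ μ' → v (s ν - s μ) = v (s ν' - s μ')

/-- A pseudo-monotone sequence: pseudo-convergent, pseudo-divergent or pseudo-stationary. -/
def IsPseudoMonotone (v : Valuation K Γ) (s : Λ → K) : Prop :=
  IsPseudoConvergent v s ∨ IsPseudoDivergent v s ∨ IsPseudoStationary v s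

/-- `α` is a pseudo-limit of the pseudo-convergent sequence `s`:
`v(α − s_ν) = δ_ν` for all `ν`, where `δ_ν = v(s_ρ − s_ν)` for any `ρ > ν`. -/
def IsPseudoLimitPcv (v : Valuation K Γ) (s : Λ → K) (α : K) : Prop :=
  ∀ ⦃ν ρ : Λ⦄, ν < ρ → v (α - s ν) = v (s ρ - s ν)

/-- `α` is a pseudo-limit of the pseudo-divergent sequence `s`:
`v(α − s_ν) = δ_ν` for all sufficiently large `ν`, where `δ_ν = v(s_ρ − s_ν)` for any `ρ < ν`. -/
def IsPseudoLimitPdv (v : Valuation K Γ) (s : Λ → K) (α : K) : Prop :=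
  ∃ N : Λ, ∀ ⦃ν : Λ⦄, N ≤ ν → ∀ ⦃ρ : Λ⦄, ρ < ν → v (α - s ν) = v (s ρ - s ν)

/-- `α` is a pseudo-limit of the pseudo-stationary sequence `s`:
`v(α − s_ν) = δ` for all sufficiently large `ν`, where `δ` is the breadth. -/
def IsPseudoLimitPst (v : Valuation K Γ) (s : Λ → K) (α : K) : Prop :=
  ∃ N : Λ, ∀ ⦃ν : Λ⦄, N ≤ ν → ∀ ⦃μ μ' : Λ⦄, μ ≠ μ' → v (α - s ν) = v (s μ - s μ')

/-- `α` is a pseudo-limit of a strictly pseudo-monotone sequence `s`. -/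
def IsPseudoLimitSPM (v : Valuation K Γ) (s : Λ → K) (α : K) : Prop :=
  (IsPseudoConvergent v s ∧ IsPseudoLimitPcv v s α) ∨
    (IsPseudoDivergent v s ∧ IsPseudoLimitPdv v s α)

/-- The breadth ideal of a pseudo-convergent sequence:
(additively) `{x : v(x) > δ_ν for all ν}`. -/
def BreadthPcv (v : Valuation K Γ) (s : Λ → K) : Set K :=
  {x : K | ∀ ⦃ν ρ : Λ⦄, ν < ρ → v x < v (s ρ - s ν)}

/-- The breadth ideal of a pseudo-divergent sequence:
(additively) `{x : v(x) > δ_ν for some ν}`. -/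
def BreadthPdv (v : Valuation K Γ) (s : Λ → K) : Set K :=
  {x : K | ∃ ν ρ : Λ, ρ < ν ∧ v x < v (s ρ - s ν)}

/-- The breadth ideal of a pseudo-stationary sequence: (additively) `{x : v(x) ≥ δ}`. -/
def BreadthPst (v : Valuation K Γ) (s : Λ → K) : Set K :=
  {x : K | ∀ ⦃ν μ : Λ⦄, ν ≠ μ → v x ≤ v (s ν - s μ)}

/-- The breadth ideal of a sequence which is definitively either pseudo-convergent or
pseudo-stationary: `{x : v(x) ≤ v(s ρ - s ν)` for all sufficiently large `ν < ρ}`. -/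
def BreadthCvStat (v : Valuation K Γ) (s : Λ → K) : Set K :=
  {x : K | ∃ N : Λ, ∀ ⦃ν ρ : Λ⦄, N ≤ ν → ν < ρ → v x ≤ v (s ρ - s ν)}

/-- The ring `V_E` of rational functions mapping the tail of `E` into the valuation ring,
as a subset of `K(X)`. -/
def VESet (v : Valuation K Γ) (s : Λ → K) : Set (RatFunc K) :=
  {φ : RatFunc K | ∃ N : Λ, ∀ ⦃ν : Λ⦄, N ≤ ν → v (RatFunc.eval (RingHom.id K) (s ν) φ) ≤ 1}

end Defs

section FracIdeals

variable {K : Type*} [Field K]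

/-- `I` is a fractional ideal of the valuation subring `A` of `K`. -/
def IsFractionalSub (A : ValuationSubring K) (I : Submodule A K) : Prop :=
  ∃ a : K, a ∈ A ∧ a ≠ 0 ∧ ∀ x ∈ I, a * x ∈ A

/-- `I` is strictly divisorial: it equals the intersection of all principal fractional
ideals properly containing it. -/
def IsStrictlyDivisorial (A : ValuationSubring K) (I : Submodule A K) : Prop :=
  I = ⨅ c ∈ {c : K | I < Submodule.span A {c}}, Submodule.span A {c}

end FracIdeals

/-- `𝓛₁(W) = {α ∈ K : w(X−α) ∉ Γ_v}`, for an extension `w` of `v` to `K(X)`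
(`v` being the restriction `w ∘ C`). -/
def L1 {K : Type*} [Field K] {Γ : Type*} [LinearOrderedCommGroupWithZero Γ]
    (w : Valuation (RatFunc K) Γ) : Set K :=
  {α : K | ∀ c : K, c ≠ 0 → w (RatFunc.X - RatFunc.C α) ≠ w (RatFunc.C c)}

/-- `𝓛₂(W) = {α ∈ K : w(X−α) ∈ Γ_v, and w(X−α+c) = w(X−α) whenever v(c) = w(X−α)}`. -/
def L2 {K : Type*} [Field K] {Γ : Type*} [LinearOrderedCommGroupWithZero Γ]
    (w : Valuation (RatFunc K) Γ) : Set K :=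
  {α : K | (∃ c : K, c ≠ 0 ∧ w (RatFunc.X - RatFunc.C α) = w (RatFunc.C c)) ∧
    ∀ c : K, w (RatFunc.C c) = w (RatFunc.X - RatFunc.C α) →
      w (RatFunc.X - RatFunc.C α + RatFunc.C c) = w (RatFunc.X - RatFunc.C α)}




section Proof18

open RatFunc Polynomial

variable {K : Type*} [Field K] {Γ : Type*} [LinearOrderedCommGroupWithZero Γ]

private lemma XsubC_ne_zero (β : K) : RatFunc.X - RatFunc.C β ≠ 0 := by
  have h : (Polynomial.X - Polynomial.C β : K[X]) ≠ 0 := Polynomial.X_sub_C_ne_zero β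
  have h2 := RatFunc.algebraMap_ne_zero h
  simpa [map_sub, RatFunc.algebraMap_X, RatFunc.algebraMap_C] using h2

private lemma XsubC_add (α β : K) :
    RatFunc.X - RatFunc.C β = (RatFunc.X - RatFunc.C α) + RatFunc.C (α - β) := by
  rw [map_sub]; ring

variable (w : Valuation (RatFunc K) Γ)

private lemma XsubC_val_ne_zero (β : K) : w (RatFunc.X - RatFunc.C β) ≠ 0 :=
  (Valuation.ne_zero_iff w).mpr (XsubC_ne_zero β)

private lemma CV_ne_zero {d : K} (hd : d ≠ 0) : w (RatFunc.C d) ≠ 0 :=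
  (Valuation.ne_zero_iff w).mpr (by simpa using hd)

private lemma L1_val_of_lt {α β : K} (h : w (RatFunc.C (α - β)) < w (RatFunc.X - RatFunc.C α)) :
    w (RatFunc.X - RatFunc.C β) = w (RatFunc.X - RatFunc.C α) := by
  rw [XsubC_add α β]; exact Valuation.map_add_eq_of_lt_left _ h

private lemma L1_val_of_gt {α β : K} (h : w (RatFunc.X - RatFunc.C α) < w (RatFunc.C (α - β))) :
    w (RatFunc.X - RatFunc.C β) = w (RatFunc.C (α - β)) := by
  rw [XsubC_add α β]; exact Valuation.map_add_eq_of_lt_right _ h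

private lemma L1_mem_iff {α : K} (hα : α ∈ L1 w) {r : K} (hr : r ≠ 0) :
    α - r ∈ L1 w ↔ w (RatFunc.C r) < w (RatFunc.X - RatFunc.C α) := by
  have hne : w (RatFunc.C r) ≠ w (RatFunc.X - RatFunc.C α) := fun h => hα r hr h.symm
  have hab : α - (α - r) = r := by ring
  constructor
  · intro hmem
    rcases lt_or_gt_of_ne hne with h | h
    · exact h
    · exfalso
      have hv := L1_val_of_gt w (α := α) (β := α - r) (by rwa [hab])
      rw [hab] at hv
      exact hmem r hr hv
  · intro h c hc hceq
    have hv := L1_val_of_lt w (α := α) (β := α - r) (by rwa [hab])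
    exact hα c hc (hv.symm.trans hceq)

-- L2 helpers
private lemma L2_val (w : Valuation (RatFunc K) Γ) {α : K} (hα : α ∈ L2 w) (β : K) :
    w (RatFunc.X - RatFunc.C β)
      = max (w (RatFunc.X - RatFunc.C α)) (w (RatFunc.C (α - β))) := by
  rcases lt_trichotomy (w (RatFunc.C (α - β))) (w (RatFunc.X - RatFunc.C α)) with h | h | h
  · rw [L1_val_of_lt w h, max_eq_left h.le]
  · rw [max_eq_right h.ge, h, XsubC_add α β]
    exact hα.2 (α - β) h
  · rw [L1_val_of_gt w h, max_eq_right h.le]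

private lemma L2_mem_iff (w : Valuation (RatFunc K) Γ) {α : K} (hα : α ∈ L2 w) {c : K}
    (hc : c ≠ 0) :
    α - c ∈ L2 w ↔ w (RatFunc.C c) ≤ w (RatFunc.X - RatFunc.C α) := by
  have habc : α - (α - c) = c := by ring
  constructor
  · intro hmem
    by_contra hgt
    push_neg at hgt
    have hv : w (RatFunc.X - RatFunc.C (α - c)) = w (RatFunc.C c) := by
      rw [L2_val w hα (α - c), habc, max_eq_right hgt.le]
    have hkey := hmem.2 (-c) (by rw [map_neg, Valuation.map_neg, hv])
    have hXα : RatFunc.X - RatFunc.C (α - c) + RatFunc.C (-c) = RatFunc.X - RatFunc.C α := by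
      rw [map_sub, map_neg]; ring
    rw [hXα, hv] at hkey
    exact absurd hkey (ne_of_lt hgt)
  · intro hle
    have hv : w (RatFunc.X - RatFunc.C (α - c)) = w (RatFunc.X - RatFunc.C α) := by
      rw [L2_val w hα (α - c), habc, max_eq_left hle]
    obtain ⟨e, he, heq⟩ := hα.1
    refine ⟨⟨e, he, by rw [hv, heq]⟩, ?_⟩
    intro c' hc'
    rw [hv] at hc'
    have hXβ : RatFunc.X - RatFunc.C (α - c) + RatFunc.C c'
        = RatFunc.X - RatFunc.C α + RatFunc.C (c + c') := by
      rw [map_sub, map_add]; ring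
    rw [hv, hXβ]
    rcases lt_trichotomy (w (RatFunc.C (c + c'))) (w (RatFunc.X - RatFunc.C α)) with h | h | h
    · exact Valuation.map_add_eq_of_lt_left _ h
    · exact hα.2 (c + c') h
    · exfalso
      have : w (RatFunc.C (c + c')) ≤ w (RatFunc.X - RatFunc.C α) := by
        rw [map_add]
        exact le_trans (Valuation.map_add _ _ _) (max_le hle (le_of_eq hc'))
      exact absurd this (not_le.mpr h)

private lemma factor_lemma {K : Type*} [Field K] [IsAlgClosed K]
    {Γ₁ Γ₂ : Type*} [LinearOrderedCommGroupWithZero Γ₁] [LinearOrderedCommGroupWithZero Γ₂]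
    (w₁ : Valuation (RatFunc K) Γ₁) (w₂ : Valuation (RatFunc K) Γ₂) (α : K)
    (hlin : ∀ β : K, ∃ d : K, d ≠ 0 ∧ ∃ m : ℕ,
      w₁ (RatFunc.X - RatFunc.C β) = w₁ (RatFunc.C d) * w₁ (RatFunc.X - RatFunc.C α) ^ m ∧
      w₂ (RatFunc.X - RatFunc.C β) = w₂ (RatFunc.C d) * w₂ (RatFunc.X - RatFunc.C α) ^ m) :
    ∀ φ : RatFunc K, φ ≠ 0 → ∃ d : K, d ≠ 0 ∧ ∃ m : ℤ,
      w₁ φ = w₁ (RatFunc.C d) * w₁ (RatFunc.X - RatFunc.C α) ^ m ∧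
      w₂ φ = w₂ (RatFunc.C d) * w₂ (RatFunc.X - RatFunc.C α) ^ m := by
  set δ₁ := w₁ (RatFunc.X - RatFunc.C α) with hδ₁
  set δ₂ := w₂ (RatFunc.X - RatFunc.C α) with hδ₂
  have hδ₁0 : δ₁ ≠ 0 := XsubC_val_ne_zero w₁ α
  have hδ₂0 : δ₂ ≠ 0 := XsubC_val_ne_zero w₂ α
  have hms : ∀ s : Multiset K, ∃ d : K, d ≠ 0 ∧ ∃ m : ℕ,
      w₁ (s.map fun a => RatFunc.X - RatFunc.C a).prod = w₁ (RatFunc.C d) * δ₁ ^ m ∧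
      w₂ (s.map fun a => RatFunc.X - RatFunc.C a).prod = w₂ (RatFunc.C d) * δ₂ ^ m := by
    intro s
    induction s using Multiset.induction_on with
    | empty => exact ⟨1, one_ne_zero, 0, by simp, by simp⟩
    | cons a s ih =>
      obtain ⟨d, hd, m, h1, h2⟩ := ih
      obtain ⟨e, he, k, g1, g2⟩ := hlin a
      refine ⟨e * d, mul_ne_zero he hd, k + m, ?_, ?_⟩ <;>
        rw [Multiset.map_cons, Multiset.prod_cons, Valuation.map_mul]
      · rw [g1, h1, pow_add, map_mul, Valuation.map_mul]; exact mul_mul_mul_comm _ _ _ _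
      · rw [g2, h2, pow_add, map_mul, Valuation.map_mul]; exact mul_mul_mul_comm _ _ _ _
  have hpoly : ∀ p : K[X], p ≠ 0 → ∃ d : K, d ≠ 0 ∧ ∃ m : ℕ,
      w₁ (algebraMap K[X] (RatFunc K) p) = w₁ (RatFunc.C d) * δ₁ ^ m ∧
      w₂ (algebraMap K[X] (RatFunc K) p) = w₂ (RatFunc.C d) * δ₂ ^ m := by
    intro p hp
    have hfact := Polynomial.Splits.eq_prod_roots (IsAlgClosed.splits p)
    obtain ⟨d, hd, m, h1, h2⟩ := hms p.roots
    have hmap : algebraMap K[X] (RatFunc K)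
          ((p.roots.map fun a => Polynomial.X - Polynomial.C a).prod)
        = (p.roots.map fun a => RatFunc.X - RatFunc.C a).prod := by
      rw [map_multiset_prod, Multiset.map_map]
      congr 1
      apply Multiset.map_congr rfl
      intro a _
      simp [Function.comp, map_sub, RatFunc.algebraMap_X, RatFunc.algebraMap_C]
    refine ⟨p.leadingCoeff * d, mul_ne_zero (Polynomial.leadingCoeff_ne_zero.mpr hp) hd, m,
      ?_, ?_⟩
    · conv_lhs => rw [hfact]
      rw [map_mul, RatFunc.algebraMap_C, hmap, Valuation.map_mul, h1, map_mul,
        Valuation.map_mul, mul_assoc]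
    · conv_lhs => rw [hfact]
      rw [map_mul, RatFunc.algebraMap_C, hmap, Valuation.map_mul, h2, map_mul,
        Valuation.map_mul, mul_assoc]
  intro φ hφ
  obtain ⟨d₁, hd₁, m₁, a1, a2⟩ := hpoly φ.num (RatFunc.num_ne_zero hφ)
  obtain ⟨d₂, hd₂, m₂, b1, b2⟩ := hpoly φ.denom (RatFunc.denom_ne_zero φ)
  refine ⟨d₁ / d₂, div_ne_zero hd₁ hd₂, (m₁ : ℤ) - (m₂ : ℤ), ?_, ?_⟩
  · conv_lhs => rw [← RatFunc.num_div_denom φ]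
    rw [map_div₀, a1, b1, map_div₀, map_div₀, mul_div_mul_comm,
      ← zpow_natCast δ₁ m₁, ← zpow_natCast δ₁ m₂, ← zpow_sub₀ hδ₁0]
  · conv_lhs => rw [← RatFunc.num_div_denom φ]
    rw [map_div₀, a2, b2, map_div₀, map_div₀, mul_div_mul_comm,
      ← zpow_natCast δ₂ m₁, ← zpow_natCast δ₂ m₂, ← zpow_sub₀ hδ₂0]

private lemma mul_le_one_iff_le_inv' {Γ' : Type*} [LinearOrderedCommGroupWithZero Γ']
    {a : Γ'} (b : Γ') (ha : a ≠ 0) : a * b ≤ 1 ↔ b ≤ a⁻¹ := by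
  rw [mul_comm, ← div_inv_eq_mul]
  exact div_le_one₀ (zero_lt_iff.mpr (inv_ne_zero ha))

private lemma L1_case {K : Type*} [Field K] [IsAlgClosed K]
    {Γ₁ Γ₂ : Type*} [LinearOrderedCommGroupWithZero Γ₁] [LinearOrderedCommGroupWithZero Γ₂]
    (w₁ : Valuation (RatFunc K) Γ₁) (w₂ : Valuation (RatFunc K) Γ₂)
    (hE : ∀ a b : K, w₁ (RatFunc.C a) ≤ w₁ (RatFunc.C b) ↔ w₂ (RatFunc.C a) ≤ w₂ (RatFunc.C b))
    (heq : L1 w₁ = L1 w₂) {α : K} (hα : α ∈ L1 w₁) :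
    ∀ φ : RatFunc K, w₁ φ ≤ 1 ↔ w₂ φ ≤ 1 := by
  have hα₂ : α ∈ L1 w₂ := heq ▸ hα
  have hδ₁0 : w₁ (RatFunc.X - RatFunc.C α) ≠ 0 := XsubC_val_ne_zero w₁ α
  have hδ₂0 : w₂ (RatFunc.X - RatFunc.C α) ≠ 0 := XsubC_val_ne_zero w₂ α
  have keylt : ∀ r : K, r ≠ 0 → (w₁ (RatFunc.C r) < w₁ (RatFunc.X - RatFunc.C α) ↔
      w₂ (RatFunc.C r) < w₂ (RatFunc.X - RatFunc.C α)) := fun r hr => by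
    rw [← L1_mem_iff w₁ hα hr, ← L1_mem_iff w₂ hα₂ hr, heq]
  have keyle : ∀ r : K, r ≠ 0 → (w₁ (RatFunc.X - RatFunc.C α) ≤ w₁ (RatFunc.C r) ↔
      w₂ (RatFunc.X - RatFunc.C α) ≤ w₂ (RatFunc.C r)) := fun r hr => by
    rw [← not_lt, ← not_lt]
    exact not_congr (keylt r hr)
  have keyle' : ∀ r : K, r ≠ 0 → (w₁ (RatFunc.C r) ≤ w₁ (RatFunc.X - RatFunc.C α) ↔
      w₂ (RatFunc.C r) ≤ w₂ (RatFunc.X - RatFunc.C α)) := fun r hr => by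
    rw [Ne.le_iff_lt (fun h => hα r hr h.symm), Ne.le_iff_lt (fun h => hα₂ r hr h.symm)]
    exact keylt r hr
  have keypow : ∀ n : ℕ, n ≠ 0 → ∀ e : K, e ≠ 0 →
      ((w₁ (RatFunc.X - RatFunc.C α) ^ n ≤ w₁ (RatFunc.C e) ↔
        w₂ (RatFunc.X - RatFunc.C α) ^ n ≤ w₂ (RatFunc.C e)) ∧
       (w₁ (RatFunc.C e) ≤ w₁ (RatFunc.X - RatFunc.C α) ^ n ↔
        w₂ (RatFunc.C e) ≤ w₂ (RatFunc.X - RatFunc.C α) ^ n)) := by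
    intro n hn e he
    obtain ⟨r, hrn⟩ := IsAlgClosed.exists_pow_nat_eq e (Nat.pos_of_ne_zero hn)
    have hr : r ≠ 0 := by rintro rfl; rw [zero_pow hn] at hrn; exact he hrn.symm
    have h1 : w₁ (RatFunc.C e) = w₁ (RatFunc.C r) ^ n := by rw [← hrn, map_pow, map_pow]
    have h2 : w₂ (RatFunc.C e) = w₂ (RatFunc.C r) ^ n := by rw [← hrn, map_pow, map_pow]
    rw [h1, h2, pow_le_pow_iff_left₀ zero_le' zero_le' hn,
      pow_le_pow_iff_left₀ zero_le' zero_le' hn, pow_le_pow_iff_left₀ zero_le' zero_le' hn,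
      pow_le_pow_iff_left₀ zero_le' zero_le' hn]
    exact ⟨keyle r hr, keyle' r hr⟩
  have hlin : ∀ β : K, ∃ d : K, d ≠ 0 ∧ ∃ m : ℕ,
      w₁ (RatFunc.X - RatFunc.C β) = w₁ (RatFunc.C d) * w₁ (RatFunc.X - RatFunc.C α) ^ m ∧
      w₂ (RatFunc.X - RatFunc.C β) = w₂ (RatFunc.C d) * w₂ (RatFunc.X - RatFunc.C α) ^ m := by
    intro β
    by_cases hβ : β ∈ L1 w₁
    · have hβ₂ : β ∈ L1 w₂ := heq ▸ hβ
      refine ⟨1, one_ne_zero, 1, ?_, ?_⟩ <;> rw [map_one, Valuation.map_one, one_mul, pow_one]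
      · rcases eq_or_ne β α with rfl | hne
        · rfl
        · have hr : α - β ≠ 0 := sub_ne_zero.mpr (Ne.symm hne)
          have hmem : α - (α - β) ∈ L1 w₁ := by rwa [sub_sub_cancel]
          exact L1_val_of_lt w₁ ((L1_mem_iff w₁ hα hr).mp hmem)
      · rcases eq_or_ne β α with rfl | hne
        · rfl
        · have hr : α - β ≠ 0 := sub_ne_zero.mpr (Ne.symm hne)
          have hmem : α - (α - β) ∈ L1 w₂ := by rwa [sub_sub_cancel]
          exact L1_val_of_lt w₂ ((L1_mem_iff w₂ hα₂ hr).mp hmem)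
    · have hβ₂ : β ∉ L1 w₂ := heq ▸ hβ
      have hne : β ≠ α := fun h => hβ (h ▸ hα)
      have hr : α - β ≠ 0 := sub_ne_zero.mpr (Ne.symm hne)
      refine ⟨α - β, hr, 0, ?_, ?_⟩ <;> rw [pow_zero, mul_one]
      · have h1 : ¬ w₁ (RatFunc.C (α - β)) < w₁ (RatFunc.X - RatFunc.C α) := fun h =>
          hβ (by have := (L1_mem_iff w₁ hα hr).mpr h; rwa [sub_sub_cancel] at this)
        exact L1_val_of_gt w₁ (lt_of_le_of_ne (not_lt.mp h1) (hα (α - β) hr))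
      · have h1 : ¬ w₂ (RatFunc.C (α - β)) < w₂ (RatFunc.X - RatFunc.C α) := fun h =>
          hβ₂ (by have := (L1_mem_iff w₂ hα₂ hr).mpr h; rwa [sub_sub_cancel] at this)
        exact L1_val_of_gt w₂ (lt_of_le_of_ne (not_lt.mp h1) (hα₂ (α - β) hr))
  intro φ
  rcases eq_or_ne φ 0 with rfl | hφ
  · simp
  obtain ⟨d, hd, m, h1, h2⟩ := factor_lemma w₁ w₂ α hlin φ hφ
  have hd₁ : w₁ (RatFunc.C d) ≠ 0 := CV_ne_zero w₁ hd
  have hd₂ : w₂ (RatFunc.C d) ≠ 0 := CV_ne_zero w₂ hd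
  rw [h1, h2]
  obtain ⟨n, rfl | rfl⟩ := m.eq_nat_or_neg
  · rcases eq_or_ne n 0 with rfl | hn
    · simp only [Nat.cast_zero, zpow_zero, mul_one]
      simpa using hE d 1
    · rw [zpow_natCast, zpow_natCast, mul_le_one_iff_le_inv' _ hd₁,
        mul_le_one_iff_le_inv' _ hd₂]
      have e1 : (w₁ (RatFunc.C d))⁻¹ = w₁ (RatFunc.C d⁻¹) := by rw [map_inv₀, map_inv₀]
      have e2 : (w₂ (RatFunc.C d))⁻¹ = w₂ (RatFunc.C d⁻¹) := by rw [map_inv₀, map_inv₀]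
      rw [e1, e2]
      exact (keypow n hn d⁻¹ (inv_ne_zero hd)).1
  · rcases eq_or_ne n 0 with rfl | hn
    · simp only [Nat.cast_zero, neg_zero, zpow_zero, mul_one]
      simpa using hE d 1
    · rw [zpow_neg, zpow_natCast, zpow_neg, zpow_natCast, ← div_eq_mul_inv, ← div_eq_mul_inv,
        div_le_one₀ (zero_lt_iff.mpr (pow_ne_zero n hδ₁0)),
        div_le_one₀ (zero_lt_iff.mpr (pow_ne_zero n hδ₂0))]
      exact (keypow n hn d hd).2

private lemma L2_case {K : Type*} [Field K] [IsAlgClosed K]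
    {Γ₁ Γ₂ : Type*} [LinearOrderedCommGroupWithZero Γ₁] [LinearOrderedCommGroupWithZero Γ₂]
    (w₁ : Valuation (RatFunc K) Γ₁) (w₂ : Valuation (RatFunc K) Γ₂)
    (hE : ∀ a b : K, w₁ (RatFunc.C a) ≤ w₁ (RatFunc.C b) ↔ w₂ (RatFunc.C a) ≤ w₂ (RatFunc.C b))
    (heq : L2 w₁ = L2 w₂) {α : K} (hα : α ∈ L2 w₁) :
    ∀ φ : RatFunc K, w₁ φ ≤ 1 ↔ w₂ φ ≤ 1 := by
  have hα₂ : α ∈ L2 w₂ := heq ▸ hα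
  obtain ⟨c₀, hc₀, hδ1⟩ := hα.1
  obtain ⟨c₁, hc₁, hδ2⟩ := hα₂.1
  have m1 : α - c₀ ∈ L2 w₁ := (L2_mem_iff w₁ hα hc₀).mpr hδ1.ge
  have m1' : α - c₀ ∈ L2 w₂ := heq ▸ m1
  have le1 : w₂ (RatFunc.C c₀) ≤ w₂ (RatFunc.X - RatFunc.C α) := (L2_mem_iff w₂ hα₂ hc₀).mp m1'
  have m2 : α - c₁ ∈ L2 w₂ := (L2_mem_iff w₂ hα₂ hc₁).mpr hδ2.ge
  have m2' : α - c₁ ∈ L2 w₁ := heq ▸ m2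
  have le2 : w₁ (RatFunc.C c₁) ≤ w₁ (RatFunc.X - RatFunc.C α) := (L2_mem_iff w₁ hα hc₁).mp m2'
  have le2' : w₂ (RatFunc.C c₁) ≤ w₂ (RatFunc.C c₀) := (hE c₁ c₀).mp (hδ1 ▸ le2)
  have hδ2' : w₂ (RatFunc.X - RatFunc.C α) = w₂ (RatFunc.C c₀) :=
    le_antisymm (hδ2.le.trans le2') le1
  have hlin : ∀ β : K, ∃ d : K, d ≠ 0 ∧ ∃ m : ℕ,
      w₁ (RatFunc.X - RatFunc.C β) = w₁ (RatFunc.C d) * w₁ (RatFunc.X - RatFunc.C α) ^ m ∧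
      w₂ (RatFunc.X - RatFunc.C β) = w₂ (RatFunc.C d) * w₂ (RatFunc.X - RatFunc.C α) ^ m := by
    intro β
    by_cases hc : w₁ (RatFunc.C (α - β)) ≤ w₁ (RatFunc.C c₀)
    · refine ⟨c₀, hc₀, 0, ?_, ?_⟩ <;> rw [pow_zero, mul_one]
      · rw [L2_val w₁ hα β, max_eq_left (hδ1 ▸ hc)]; exact hδ1
      · have hc2 := (hE _ _).mp hc
        rw [L2_val w₂ hα₂ β, max_eq_left (hδ2' ▸ hc2)]; exact hδ2'
    · push_neg at hc
      have hab : α - β ≠ 0 := by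
        intro h0
        rw [h0] at hc
        simp at hc
      refine ⟨α - β, hab, 0, ?_, ?_⟩ <;> rw [pow_zero, mul_one]
      · rw [L2_val w₁ hα β, max_eq_right (hδ1.le.trans hc.le)]
      · have hc2 : w₂ (RatFunc.C c₀) < w₂ (RatFunc.C (α - β)) :=
          lt_of_not_ge fun h => not_le.mpr hc ((hE _ _).mpr h)
        rw [L2_val w₂ hα₂ β, max_eq_right (hδ2'.le.trans hc2.le)]
  intro φ
  rcases eq_or_ne φ 0 with rfl | hφ
  · simp
  obtain ⟨d, hd, m, h1, h2⟩ := factor_lemma w₁ w₂ α hlin φ hφ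
  rw [h1, h2, hδ1, hδ2']
  have e1 : w₁ (RatFunc.C (d * c₀ ^ m)) = w₁ (RatFunc.C d) * w₁ (RatFunc.C c₀) ^ m := by
    rw [map_mul, map_zpow₀, Valuation.map_mul, map_zpow₀]
  have e2 : w₂ (RatFunc.C (d * c₀ ^ m)) = w₂ (RatFunc.C d) * w₂ (RatFunc.C c₀) ^ m := by
    rw [map_mul, map_zpow₀, Valuation.map_mul, map_zpow₀]
  rw [← e1, ← e2]
  simpa using hE (d * c₀ ^ m) 1

end Proof18

/-- Let `K` be algebraically closed and `W₁, W₂` two extensions of the same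
valuation domain `V` of `K` to `K(X)` (given by valuations `w₁, w₂` on `K(X)` whose
restrictions to `K` have the same valuation ring `V`). If `𝓛₁(W₁) = 𝓛₁(W₂) ≠ ∅` or
`𝓛₂(W₁) = 𝓛₂(W₂) ≠ ∅`, then `W₁ = W₂`. -/
theorem stmt18 {K : Type*} [Field K] [IsAlgClosed K]
    {Γ₁ Γ₂ : Type*} [LinearOrderedCommGroupWithZero Γ₁] [LinearOrderedCommGroupWithZero Γ₂]
    (w₁ : Valuation (RatFunc K) Γ₁) (w₂ : Valuation (RatFunc K) Γ₂)
    (hV : ∀ a : K, w₁ (RatFunc.C a) ≤ 1 ↔ w₂ (RatFunc.C a) ≤ 1)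
    (h : (L1 w₁ = L1 w₂ ∧ (L1 w₁).Nonempty) ∨ (L2 w₁ = L2 w₂ ∧ (L2 w₁).Nonempty)) :
    ∀ φ : RatFunc K, w₁ φ ≤ 1 ↔ w₂ φ ≤ 1 := by
  have hE' : (w₁.comap RatFunc.C).IsEquiv (w₂.comap RatFunc.C) :=
    Valuation.isEquiv_of_val_le_one (fun {x} => hV x)
  have hE : ∀ a b : K, w₁ (RatFunc.C a) ≤ w₁ (RatFunc.C b) ↔ w₂ (RatFunc.C a) ≤ w₂ (RatFunc.C b) :=
    fun a b => hE' a b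
  rcases h with ⟨heq, α, hα⟩ | ⟨heq, α, hα⟩
  · exact L1_case w₁ w₂ hE heq hα
  · exact L2_case w₁ w₂ hE heq hα
end

section
/- Let V be a valuation domain with quotient field K and let E = {s_ν}, F = {t_ν} be pseudo-stationary sequences in K with breadths δ_E and δ_F respectively. Then V_E = V_F if and only if δ_E = δ_F = δ and v(s_ν − t_μ) ≥ δ for all ν, μ. -/
/-!
Everything rests on how `v (x - b)` behaves along a pseudo-stationary sequence of breadth `δ`.

If `V_E ⊆ V_F`, the rational functions `(X - b)/d` and `d/(X - b)` both lie in `V_E` exactly when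
`v (s ν - b) = v d` eventually, so this property passes from `E` to `F`. Taking `b = s κ` gives
`v (t μ - s κ) = δ_E` for all large `μ`, and the ultrametric inequality then yields `δ_F ≤ δ_E`
and `v (s ν - t μ) ≤ δ_E`.

Conversely, extend `v` to an algebraic closure, where every polynomial is a product of linear
factors `X - r`. Fixing a term `b` of `E`, all pairwise differences in `E ∪ F` have value at most
`δ`, so `v (x - r) = max δ (v (b - r))` for all but at most one term `x` of each sequence. Hence
`v (f x)` is eventually the same constant along `E` and along `F`, and comparing the numerator and
denominator of `φ` carries `φ ∈ V_E` over to `φ ∈ V_F`.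
-/

open scoped Pointwise Classical

open Filter Polynomial

section RatFuncEval

universe u

variable {K L : Type u} [Field K] [Field L] {f : K →+* L} {a : L}

theorem RatFunc.eval_inv_algebraMap {q : K[X]} (hq : q.eval₂ f a ≠ 0) :
    RatFunc.eval f a (algebraMap K[X] (RatFunc K) q)⁻¹ = (q.eval₂ f a)⁻¹ := by
  have hq0 : algebraMap K[X] (RatFunc K) q ≠ 0 :=
    RatFunc.algebraMap_ne_zero (by rintro rfl; simp at hq)
  have hden : (RatFunc.denom (algebraMap K[X] (RatFunc K) q)⁻¹).eval₂ f a ≠ 0 := fun h => hq <| by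
    simpa [RatFunc.num_algebraMap] using
      eval₂_eq_zero_of_dvd_of_eval₂_eq_zero f a (RatFunc.denom_inv_dvd hq0) h
  have hevq : RatFunc.eval f a (algebraMap K[X] (RatFunc K) q) = q.eval₂ f a := by simp
  refine eq_inv_of_mul_eq_one_left ?_
  rw [← hevq, ← RatFunc.eval_mul f a hden (by simp), inv_mul_cancel₀ hq0, RatFunc.eval_one]

theorem RatFunc.eval_id (φ : RatFunc K) (x : K) :
    φ.eval (RingHom.id K) x = φ.num.eval x / φ.denom.eval x := rfl

end RatFuncEval

section Extension

variable {K : Type*} [Field K] {Γ : Type*} [LinearOrderedCommGroupWithZero Γ]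

theorem Valuation.exists_isEquiv_comap_valuation (v : Valuation K Γ) (L : Type*) [Field L]
    [Algebra K L] : ∃ B : ValuationSubring L, v.IsEquiv (B.valuation.comap (algebraMap K L)) := by
  obtain ⟨B, hB, hloc⟩ :=
    IsLocalRing.exists_factor_valuationRing ((algebraMap K L).comp v.valuationSubring.subtype)
  refine ⟨B, Valuation.isEquiv_iff_val_le_one.2 fun {x} => ?_⟩
  rw [Valuation.comap_apply, ValuationSubring.valuation_le_one_iff]
  refine ⟨fun hx => hB ⟨x, hx⟩, fun hx => ?_⟩
  by_contra! hx1
  have hx0 : x ≠ 0 := by rintro rfl; simp at hx1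
  have hinv : x⁻¹ ∈ v.valuationSubring := by
    rw [Valuation.mem_valuationSubring_iff, map_inv₀]
    exact inv_le_one_of_one_le₀ hx1.le
  -- `x⁻¹` maps to a unit of `B`, so locality makes it a unit of `v`'s ring, i.e. `v x ≤ 1`
  have hunit : IsUnit (⟨x⁻¹, hinv⟩ : v.valuationSubring) :=
    hloc.map_nonunit _ <| IsUnit.of_mul_eq_one ⟨algebraMap K L x, hx⟩ <|
      Subtype.ext (by simp [hx0])
  obtain ⟨y, hy⟩ := hunit.exists_right_inv
  have hyx : (y : K) = x := by
    have : x⁻¹ * (y : K) = 1 := congrArg Subtype.val hy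
    rwa [inv_mul_eq_one₀ hx0, eq_comm] at this
  exact hx1.not_ge (hyx ▸ y.2)

end Extension

section ConstantBreadth

variable {K : Type*} [Field K] {Γ : Type*} [LinearOrderedCommGroupWithZero Γ] (v : Valuation K Γ)
  {ι : Type*} {s : ι → K} {δ : Γ}

theorem Valuation.map_eq_one_iff_le_one_and_inv_le_one {y : K} (hy : y ≠ 0) :
    v y = 1 ↔ v y ≤ 1 ∧ v y⁻¹ ≤ 1 := by
  rw [map_inv₀, inv_le_one₀ (v.pos_iff.2 hy), ← le_antisymm_iff]

theorem Valuation.map_sub_eq_max_or_lt {x b : K} (hxb : v (x - b) ≤ δ) (a : K) :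
    v (x - a) = max δ (v (b - a)) ∨ v (x - a) < δ := by
  rw [← sub_add_sub_cancel x b a]
  rcases le_or_gt (v (b - a)) δ with hba | hba
  · rw [max_eq_left hba]
    exact (v.map_add_le hxb hba).lt_or_eq.symm
  · rw [max_eq_right hba.le]
    exact Or.inl (v.map_add_eq_of_lt_right (hxb.trans_lt hba))

theorem subsingleton_setOf_map_sub_lt (hs : ∀ ⦃i j⦄, i ≠ j → v (s i - s j) = δ) (a : K) :
    {i | v (s i - a) < δ}.Subsingleton := by
  intro i hi j hj
  by_contra hij
  have := (v.map_sub _ _).trans_lt (max_lt hi hj)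
  rw [sub_sub_sub_cancel_right, hs hij] at this
  exact this.false

theorem eventually_cofinite_map_sub_eq_max (hs : ∀ ⦃i j⦄, i ≠ j → v (s i - s j) = δ) {b : K}
    (hb : ∀ i, v (s i - b) ≤ δ) (a : K) :
    ∀ᶠ i in cofinite, v (s i - a) = max δ (v (b - a)) :=
  eventually_cofinite.2 <| (subsingleton_setOf_map_sub_lt v hs a).finite.subset fun i hi =>
    (v.map_sub_eq_max_or_lt (hb i) a).resolve_left hi

theorem eventually_cofinite_map_eval_eq (hs : ∀ ⦃i j⦄, i ≠ j → v (s i - s j) = δ) {b : K}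
    (hb : ∀ i, v (s i - b) ≤ δ) {f : K[X]} (hf : f.Splits) :
    ∀ᶠ i in cofinite,
      v (f.eval (s i)) = v f.leadingCoeff * (f.roots.map fun r => max δ (v (b - r))).prod := by
  filter_upwards [(eventually_all_finset f.roots.toFinset).2 fun r _ =>
    eventually_cofinite_map_sub_eq_max v hs hb r] with i hi
  rw [hf.eval_eq_prod_roots, map_mul, map_multiset_prod, Multiset.map_map]
  exact congrArg _ <| congrArg Multiset.prod <|
    Multiset.map_congr rfl fun r hr => hi r (Multiset.mem_toFinset.2 hr)

end ConstantBreadth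

section Comparison

variable {K : Type*} [Field K] {Γ : Type*} [LinearOrderedCommGroupWithZero Γ] (v : Valuation K Γ)
  {ι : Type*} {s t : ι → K} {δ : Γ}

theorem eventually_cofinite_map_eval_le_of_frequently
    (hs : ∀ ⦃i j⦄, i ≠ j → v (s i - s j) = δ) (ht : ∀ ⦃i j⦄, i ≠ j → v (t i - t j) = δ)
    (hst : ∀ i j, v (s i - t j) ≤ δ) {f g : K[X]}
    (hfg : ∃ᶠ i in cofinite, v (f.eval (s i)) ≤ v (g.eval (s i))) :
    ∀ᶠ j in cofinite, v (f.eval (t j)) ≤ v (g.eval (t j)) := by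
  obtain ⟨B, hB⟩ := v.exists_isEquiv_comap_valuation (AlgebraicClosure K)
  set e := algebraMap K (AlgebraicClosure K)
  set w := B.valuation
  obtain ⟨i₀, -⟩ := hfg.exists
  obtain ⟨i₁, -, hi₁⟩ := (hfg.and_eventually (eventually_cofinite_ne i₀)).exists
  have value (u : ι → K) (hu : ∀ ⦃i j⦄, i ≠ j → v (u i - u j) = δ)
      (hu₀ : ∀ i, v (u i - s i₀) ≤ δ) (p : K[X]) : ∀ᶠ i in cofinite,
      w (e (p.eval (u i))) = w (p.map e).leadingCoeff *
        ((p.map e).roots.map fun r => max (w (e (s i₁ - s i₀))) (w (e (s i₀) - r))).prod := by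
    have hδ : ∀ ⦃i j⦄, i ≠ j → v (u i - u j) = v (s i₁ - s i₀) :=
      fun i j h => (hu h).trans (hs hi₁).symm
    have hu' : ∀ ⦃i j⦄, i ≠ j → w (e (u i) - e (u j)) = w (e (s i₁ - s i₀)) :=
      fun i j h => by rw [← map_sub]; exact hB.eq_iff.1 (hδ h)
    have hu₀' : ∀ i, w (e (u i) - e (s i₀)) ≤ w (e (s i₁ - s i₀)) :=
      fun i => by rw [← map_sub]; exact (hB _ _).1 ((hu₀ i).trans_eq (hs hi₁).symm)
    filter_upwards [eventually_cofinite_map_eval_eq w hu' hu₀'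
      (IsAlgClosed.splits (p.map e))] with i hi
    rwa [Polynomial.eval_map, Polynomial.eval₂_at_apply] at hi
  have hs₀ (i : ι) : v (s i - s i₀) ≤ δ := by
    rcases eq_or_ne i i₀ with rfl | h
    · simp
    · exact (hs h).le
  have ht₀ (j : ι) : v (t j - s i₀) ≤ δ := v.map_sub_swap _ _ ▸ hst i₀ j
  obtain ⟨i, ⟨hi, hfi⟩, hgi⟩ :=
    ((hfg.and_eventually (value s hs hs₀ f)).and_eventually (value s hs hs₀ g)).exists
  have hle := (hB _ _).1 hi
  rw [Valuation.comap_apply, Valuation.comap_apply, hfi, hgi] at hle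
  filter_upwards [value t ht ht₀ f, value t ht ht₀ g] with j hfj hgj
  exact (hB _ _).2 (by rwa [Valuation.comap_apply, Valuation.comap_apply, hfj, hgj])

end Comparison

section Injective

variable {α β : Type*} [Preorder α] [NoTopOrder α] {f : α → β}

theorem Function.Injective.eventually_atTop_notMem (hf : Function.Injective f) {S : Set β}
    (hS : S.Finite) : ∀ᶠ a in atTop, f a ∉ S :=
  (hf.tendsto_cofinite.eventually hS.eventually_cofinite_notMem).filter_mono atTop_le_cofinite

theorem Function.Injective.eventually_atTop_ne (hf : Function.Injective f) (b : β) :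
    ∀ᶠ a in atTop, f a ≠ b :=
  hf.eventually_atTop_notMem (Set.finite_singleton b)

end Injective

section VESet

variable {K : Type*} [Field K] {Γ : Type*} [LinearOrderedCommGroupWithZero Γ] {v : Valuation K Γ}
  {Λ : Type*} {s t : Λ → K}

theorem IsPseudoStationary.injective (h : IsPseudoStationary v s) : Function.Injective s :=
  fun _ _ hst => by_contra fun hne => h.1 hne hst

variable [LinearOrder Λ]

theorem mem_VESet_iff [Nonempty Λ] {φ : RatFunc K} :
    φ ∈ VESet v s ↔ ∀ᶠ ν in atTop, v (φ.eval (RingHom.id K) (s ν)) ≤ 1 :=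
  eventually_atTop.symm

theorem VESet_subset_VESet_of_map_sub_le [Nonempty Λ] [NoMaxOrder Λ] {δ : Γ}
    (hsinj : Function.Injective s) (hs : ∀ ⦃ν μ⦄, ν ≠ μ → v (s ν - s μ) = δ)
    (ht : ∀ ⦃ν μ⦄, ν ≠ μ → v (t ν - t μ) = δ) (hst : ∀ ν μ, v (s ν - t μ) ≤ δ) :
    VESet v s ⊆ VESet v t := by
  intro φ hφ
  rw [mem_VESet_iff] at hφ ⊢
  have hfreq : ∃ᶠ ν in cofinite, v (φ.num.eval (s ν)) ≤ v (φ.denom.eval (s ν)) := by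
    refine (Eventually.frequently ?_).filter_mono atTop_le_cofinite
    filter_upwards [hφ, hsinj.eventually_atTop_notMem (finite_setOfPred_isRoot φ.denom_ne_zero)]
      with ν hν hden
    rwa [RatFunc.eval_id, map_div₀, div_le_one₀ (v.pos_iff.2 hden)] at hν
  filter_upwards [(eventually_cofinite_map_eval_le_of_frequently v hs ht hst hfreq).filter_mono
    atTop_le_cofinite] with μ hμ
  rw [RatFunc.eval_id, map_div₀]
  exact div_le_one_of_le₀ hμ zero_le

theorem eventually_map_sub_eq_iff_mem_VESet [Nonempty Λ] {b d : K} (hd : d ≠ 0)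
    (hb : ∀ᶠ ν in atTop, s ν ≠ b) :
    (∀ᶠ ν in atTop, v (s ν - b) = v d) ↔
      algebraMap K[X] (RatFunc K) (C d⁻¹ * (X - C b)) ∈ VESet v s ∧
        (algebraMap K[X] (RatFunc K) (C d⁻¹ * (X - C b)))⁻¹ ∈ VESet v s := by
  rw [mem_VESet_iff, mem_VESet_iff, ← eventually_and]
  refine eventually_congr (hb.mono fun ν hν => ?_)
  have hy : d⁻¹ * (s ν - b) ≠ 0 := mul_ne_zero (inv_ne_zero hd) (sub_ne_zero.2 hν)
  rw [RatFunc.eval_inv_algebraMap (by simpa using hy)]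
  simp only [RatFunc.eval_algebraMap, Algebra.algebraMap_self, RingHom.id_apply, eval₂_mul,
    eval₂_sub, eval₂_C, eval₂_X]
  rw [← v.map_eq_one_iff_le_one_and_inv_le_one hy, map_mul, map_inv₀, inv_mul_eq_one₀
    (v.ne_zero_iff.2 hd), eq_comm]

theorem eventually_map_sub_eq_of_VESet_subset [Nonempty Λ] [NoMaxOrder Λ]
    (hsub : VESet v s ⊆ VESet v t) (hsinj : Function.Injective s) (htinj : Function.Injective t)
    {b d : K} (hd : d ≠ 0) (h : ∀ᶠ ν in atTop, v (s ν - b) = v d) :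
    ∀ᶠ μ in atTop, v (t μ - b) = v d := by
  rw [eventually_map_sub_eq_iff_mem_VESet hd (hsinj.eventually_atTop_ne b)] at h
  rw [eventually_map_sub_eq_iff_mem_VESet hd (htinj.eventually_atTop_ne b)]
  exact ⟨hsub h.1, hsub h.2⟩

theorem eventually_map_sub_eq_breadth_of_VESet_subset [Nonempty Λ] [NoMaxOrder Λ]
    (hsub : VESet v s ⊆ VESet v t) (hsinj : Function.Injective s) (htinj : Function.Injective t)
    {δ : Γ} (hs : ∀ ⦃ν μ⦄, ν ≠ μ → v (s ν - s μ) = δ) (κ : Λ) :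
    ∀ᶠ μ in atTop, v (t μ - s κ) = δ := by
  obtain ⟨κ', hκ'⟩ := exists_gt κ
  rw [← hs hκ'.ne']
  refine eventually_map_sub_eq_of_VESet_subset hsub hsinj htinj
    (sub_ne_zero.2 (hsinj.ne hκ'.ne')) ?_
  filter_upwards [eventually_ne_atTop κ] with ν hν
  exact (hs hν).trans (hs hκ'.ne').symm

theorem breadth_le_of_VESet_subset [Nonempty Λ] [NoMaxOrder Λ] (hsub : VESet v s ⊆ VESet v t)
    (hsinj : Function.Injective s) (htinj : Function.Injective t) {δE δF : Γ}
    (hs : ∀ ⦃ν μ⦄, ν ≠ μ → v (s ν - s μ) = δE) (ht : ∀ ⦃ν μ⦄, ν ≠ μ → v (t ν - t μ) = δF) :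
    δF ≤ δE := by
  obtain ⟨κ⟩ := ‹Nonempty Λ›
  obtain ⟨M, hM⟩ :=
    eventually_atTop.1 (eventually_map_sub_eq_breadth_of_VESet_subset hsub hsinj htinj hs κ)
  obtain ⟨M', hM'⟩ := exists_gt M
  rw [← ht hM'.ne', ← sub_sub_sub_cancel_right (t M') (t M) (s κ)]
  exact v.map_sub_le (hM M' hM'.le).le (hM M le_rfl).le

theorem map_sub_le_of_VESet_subset [Nonempty Λ] [NoMaxOrder Λ] (hsub : VESet v s ⊆ VESet v t)
    (hsinj : Function.Injective s) (htinj : Function.Injective t) {δE δF : Γ}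
    (hs : ∀ ⦃ν μ⦄, ν ≠ μ → v (s ν - s μ) = δE) (ht : ∀ ⦃ν μ⦄, ν ≠ μ → v (t ν - t μ) = δF)
    (hδ : δF ≤ δE) (ν μ : Λ) : v (s ν - t μ) ≤ δE := by
  obtain ⟨M, hM, hMμ⟩ := ((eventually_map_sub_eq_breadth_of_VESet_subset hsub hsinj htinj hs ν).and
    (eventually_ne_atTop μ)).exists
  rw [← sub_sub_sub_cancel_left (t μ) (s ν) (t M)]
  exact v.map_sub_le ((ht hMμ).trans_le hδ) hM.le

theorem VESet_eq_VESet_iff [Nonempty Λ] [NoMaxOrder Λ] (hsinj : Function.Injective s)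
    (htinj : Function.Injective t) {δE δF : Γ} (hs : ∀ ⦃ν μ⦄, ν ≠ μ → v (s ν - s μ) = δE)
    (ht : ∀ ⦃ν μ⦄, ν ≠ μ → v (t ν - t μ) = δF) :
    VESet v s = VESet v t ↔ δE = δF ∧ ∀ ν μ, v (s ν - t μ) ≤ δE := by
  constructor
  · intro h
    have hFE := breadth_le_of_VESet_subset h.subset hsinj htinj hs ht
    have hEF := breadth_le_of_VESet_subset h.symm.subset htinj hsinj ht hs
    exact ⟨le_antisymm hEF hFE, map_sub_le_of_VESet_subset h.subset hsinj htinj hs ht hFE⟩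
  · rintro ⟨rfl, hst⟩
    exact (VESet_subset_VESet_of_map_sub_le hsinj hs ht hst).antisymm
      (VESet_subset_VESet_of_map_sub_le htinj ht hs fun μ ν => v.map_sub_swap _ _ ▸ hst ν μ)

end VESet

theorem stmt19_general {K : Type*} [Field K] {Γ : Type*} [LinearOrderedCommGroupWithZero Γ]
    (v : Valuation K Γ) {Λ : Type*} [LinearOrder Λ] [Nonempty Λ]
    (hnomax : ∀ ν : Λ, ∃ ρ : Λ, ν < ρ) (s t : Λ → K)
    (hE : IsPseudoStationary v s) (hF : IsPseudoStationary v t) :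
    VESet v s = VESet v t ↔
      ((∀ ⦃ν μ ν' μ' : Λ⦄, ν ≠ μ → ν' ≠ μ' → v (s ν - s μ) = v (t ν' - t μ')) ∧
        ∀ ν μ : Λ, ∀ ⦃ρ σ : Λ⦄, ρ ≠ σ → v (s ν - t μ) ≤ v (s ρ - s σ)) := by
  have : NoMaxOrder Λ := ⟨hnomax⟩
  obtain ⟨ν₀⟩ := ‹Nonempty Λ›
  obtain ⟨ν₁, h₀₁⟩ := hnomax ν₀
  have hs : ∀ ⦃ν μ⦄, ν ≠ μ → v (s ν - s μ) = v (s ν₁ - s ν₀) := fun _ _ h => hE.2 h h₀₁.ne'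
  have ht : ∀ ⦃ν μ⦄, ν ≠ μ → v (t ν - t μ) = v (t ν₁ - t ν₀) := fun _ _ h => hF.2 h h₀₁.ne'
  rw [VESet_eq_VESet_iff hE.injective hF.injective hs ht]
  constructor
  · rintro ⟨hδ, hst⟩
    exact ⟨fun ν μ ν' μ' h h' => by rw [hs h, ht h', hδ], fun ν μ ρ σ h => hs h ▸ hst ν μ⟩
  · rintro ⟨hδ, hst⟩
    exact ⟨hδ h₀₁.ne' h₀₁.ne', fun ν μ => hst ν μ h₀₁.ne'⟩

/-- Let `E = {s_ν}`, `F = {t_ν}` be pseudo-stationary sequences in `K` with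
breadths `δ_E`, `δ_F`. Then `V_E = V_F` if and only if `δ_E = δ_F = δ` and
`v(s_ν − t_μ) ≥ δ` for all `ν, μ` (multiplicatively, `v(s_ν − t_μ) ≤ δ`). -/
theorem stmt19 {K : Type*} [Field K] {Γ : Type*} [LinearOrderedCommGroupWithZero Γ]
    (v : Valuation K Γ) {Λ : Type*} [LinearOrder Λ] [WellFoundedLT Λ] [Nonempty Λ]
    (hnomax : ∀ ν : Λ, ∃ ρ : Λ, ν < ρ) (s t : Λ → K)
    (hE : IsPseudoStationary v s) (hF : IsPseudoStationary v t) :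
    VESet v s = VESet v t ↔
      ((∀ ⦃ν μ ν' μ' : Λ⦄, ν ≠ μ → ν' ≠ μ' → v (s ν - s μ) = v (t ν' - t μ')) ∧
        ∀ ν μ : Λ, ∀ ⦃ρ σ : Λ⦄, ρ ≠ σ → v (s ν - t μ) ≤ v (s ρ - s σ)) :=
  stmt19_general v hnomax s t hE hF
end
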